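/- If Σ and Ψ are n×n positive definite matrices with Ψ diagonal, Σ not diagonal, and (Ψ⁻¹)_{ii} = (Σ⁻¹)_{ii} for all i, then Ψ_{ii} ≤ Σ_{ii} for all i, with strict inequality for at least one i. -/

import Mathlib

/-!
Fix `i`, let `e = eᵢ` and `a = (S⁻¹)ᵢᵢ > 0`. The vector `S⁻¹e / a` minimises `xᵀSx` on the
hyperplane `xᵢ = 1`, with minimum `1 / a`; for the residual `z = e - S⁻¹e / a` this is the
identity `zᵀSz = Sᵢᵢ - 1 / a`. Hence `1 / (S⁻¹)ᵢᵢ ≤ Sᵢᵢ`, with equality only if `z = 0`, i.e. only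
if the `i`-th column of `S⁻¹` vanishes off the diagonal. For diagonal `Ψ`,
`Ψᵢᵢ = 1 / (Ψ⁻¹)ᵢᵢ = 1 / (S⁻¹)ᵢᵢ ≤ Sᵢᵢ`, and equality for every `i` would make `S⁻¹`, hence `S`,
diagonal.
-/

namespace Matrix

variable {n K : Type*} [Fintype n] [DecidableEq n]

theorem IsDiag.inv [CommRing K] {A : Matrix n n K} (hA : A.IsDiag) : A⁻¹.IsDiag := by
  rw [← hA.diagonal_diag, inv_diagonal]
  exact isDiag_diagonal _

theorem IsDiag.inv_apply_self [Field K] {A : Matrix n n K} (hA : A.IsDiag) (hdet : IsUnit A.det)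
    (i : n) : A⁻¹ i i = (A i i)⁻¹ := by
  have h := congr_fun₂ (mul_nonsing_inv A hdet) i i
  nth_rw 1 [← hA.diagonal_diag] at h
  rw [diagonal_mul, one_apply_eq] at h
  exact eq_inv_of_mul_eq_one_right h

variable [Field K]

noncomputable def precisionResidual (S : Matrix n n K) (i : n) : n → K :=
  Pi.single i 1 - (S⁻¹ i i)⁻¹ • (S⁻¹ *ᵥ Pi.single i 1)

theorem precisionResidual_apply_of_ne (S : Matrix n n K) {i j : n} (hji : j ≠ i) :
    precisionResidual S i j = -((S⁻¹ i i)⁻¹ * S⁻¹ j i) := by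
  simp [precisionResidual, mulVec_single, Pi.single_eq_of_ne hji]

theorem dotProduct_mulVec_precisionResidual {S : Matrix n n K} (hS : S.IsSymm)
    (hdet : IsUnit S.det) (i : n) :
    precisionResidual S i ⬝ᵥ S *ᵥ precisionResidual S i = S i i - (S⁻¹ i i)⁻¹ := by
  unfold precisionResidual
  set e : n → K := Pi.single i 1
  set y := S⁻¹ *ᵥ e
  set a := S⁻¹ i i
  have hSy : S *ᵥ y = e := by rw [mulVec_mulVec, mul_nonsing_inv _ hdet, one_mulVec]
  have hee : e ⬝ᵥ e = 1 := by simp [e]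
  have heSe : e ⬝ᵥ S *ᵥ e = S i i := by simp [e, mulVec_single]
  have hye : y ⬝ᵥ e = a := by simp [y, e, mulVec_single, a]
  have hySe : y ⬝ᵥ S *ᵥ e = 1 := by
    rw [dotProduct_mulVec, ← mulVec_transpose, hS.eq, hSy, hee]
  have hySy : y ⬝ᵥ S *ᵥ y = a := by rw [hSy, hye]
  have heSy : e ⬝ᵥ S *ᵥ y = 1 := by rw [hSy, hee]
  -- valid also for `a = 0`, where both sides vanish
  have haa : a⁻¹ * (a⁻¹ * a) = a⁻¹ := by simpa [mul_assoc] using mul_self_mul_inv a⁻¹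
  simp only [mulVec_sub, mulVec_smul, sub_dotProduct, dotProduct_sub, smul_dotProduct,
    dotProduct_smul, smul_eq_mul, heSe, heSy, hySe, hySy]
  linear_combination haa

namespace PosDef

variable [PartialOrder K] [StarRing K] [TrivialStar K] {S : Matrix n n K}

theorem dotProduct_mulVec_precisionResidual_eq (hS : S.PosDef) (i : n) :
    precisionResidual S i ⬝ᵥ S *ᵥ precisionResidual S i = S i i - (S⁻¹ i i)⁻¹ :=
  dotProduct_mulVec_precisionResidual (isHermitian_iff_isSymm.mp hS.isHermitian)
    ((isUnit_iff_isUnit_det S).mp hS.isUnit) i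

theorem inv_inv_apply_self_le [IsOrderedAddMonoid K] (hS : S.PosDef) (i : n) :
    (S⁻¹ i i)⁻¹ ≤ S i i := by
  have h := hS.posSemidef.dotProduct_mulVec_nonneg (precisionResidual S i)
  rw [star_trivial, hS.dotProduct_mulVec_precisionResidual_eq] at h
  exact sub_nonneg.mp h

theorem inv_apply_eq_zero_of_inv_inv_apply_self_eq (hS : S.PosDef) {i j : n}
    (h : (S⁻¹ i i)⁻¹ = S i i) (hji : j ≠ i) : S⁻¹ j i = 0 := by
  have hzero : precisionResidual S i = 0 := by
    by_contra hne
    have hpos := hS.dotProduct_mulVec_pos hne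
    rw [star_trivial, hS.dotProduct_mulVec_precisionResidual_eq, h, sub_self] at hpos
    exact hpos.false
  have hj := congr_fun hzero j
  rw [precisionResidual_apply_of_ne S hji, Pi.zero_apply, neg_eq_zero] at hj
  exact (mul_eq_zero.mp hj).resolve_left (inv_ne_zero hS.inv.diag_pos.ne')

theorem isDiag_of_forall_inv_inv_apply_self_eq (hS : S.PosDef)
    (h : ∀ i, (S⁻¹ i i)⁻¹ = S i i) : S.IsDiag := by
  have hinv : S⁻¹.IsDiag := fun j i hji => hS.inv_apply_eq_zero_of_inv_inv_apply_self_eq (h i) hji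
  simpa [nonsing_inv_nonsing_inv S ((isUnit_iff_isUnit_det S).mp hS.isUnit)] using hinv.inv

end PosDef

end Matrix

theorem precision_matching_underestimates_variances
    (n : ℕ) (S Ψ : Matrix (Fin n) (Fin n) ℝ)
    (hS : S.PosDef) (hΨ : Ψ.PosDef)
    (hΨdiag : Ψ.IsDiag) (hSnotdiag : ¬ S.IsDiag)
    (hmatch : ∀ i, Ψ⁻¹ i i = S⁻¹ i i) :
    (∀ i, Ψ i i ≤ S i i) ∧ (∃ i, Ψ i i < S i i) := by
  have hΨS : ∀ i, Ψ i i = (S⁻¹ i i)⁻¹ := fun i => by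
    rw [← hmatch, hΨdiag.inv_apply_self hΨ.det_pos.ne'.isUnit, inv_inv]
  refine ⟨fun i => hΨS i ▸ hS.inv_inv_apply_self_le i, ?_⟩
  by_contra! hge
  exact hSnotdiag <| hS.isDiag_of_forall_inv_inv_apply_self_eq fun i =>
    le_antisymm (hS.inv_inv_apply_self_le i) (hΨS i ▸ hge i)
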